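/- Let f : Ω → Ω̃ be a conformal equivalence between Lipschitz domains in ℝ^N whose harmonic radii transform by r̃ ∘ f = |f'| r. For u ∈ C_0^∞(Ω) define ũ by ũ ∘ f = |f'|^{(2-N)/2} u. Then for s ∈ [0,2] and p = 2(N-s)/(N-2) (or N = 2, s = 2, p arbitrary), ∫_Ω |u|^p / r^s dx = ∫_{Ω̃} |ũ|^p / r̃^s dx̃. -/

import Mathlib

open MeasureTheory

/-- Admissibility of the exponents for the conformally weighted norm:
`s ∈ [0,2]` and `p = 2(N-s)/(N-2)` if `N ≥ 3`; `s = 2` and `p` arbitrary if `N = 2`. -/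
def admConf (N : ℕ) (s p : ℝ) : Prop :=
  (3 ≤ N ∧ 0 ≤ s ∧ s ≤ 2 ∧ p = 2 * ((N : ℝ) - s) / ((N : ℝ) - 2)) ∨
  (N = 2 ∧ s = 2)

/-- Conformal transplantation preserves the weighted norm built from the harmonic
radius: if `f : Ω → Ω̃` is conformal, the harmonic radii satisfy `r̃ ∘ f = |f'| r`
and `ũ ∘ f = |f'|^{(2-N)/2} u` with `|f'| = |det Df|^{1/N}`, then
`∫_Ω |u|^p / r^s = ∫_{Ω̃} |ũ|^p / r̃^s`. -/
theorem stmt8 (N : ℕ) (hN : 2 ≤ N) (s p : ℝ) (hadm : admConf N s p)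
    (Ω Ω' : Set (EuclideanSpace ℝ (Fin N)))
    (hΩ : IsOpen Ω) (hΩ' : IsOpen Ω')
    (f : EuclideanSpace ℝ (Fin N) → EuclideanSpace ℝ (Fin N))
    (hf : ContDiffOn ℝ (⊤ : ℕ∞) f Ω) (hbij : Set.BijOn f Ω Ω')
    (hconf : ∀ x ∈ Ω, IsConformalMap (fderiv ℝ f x))
    (r r' : EuclideanSpace ℝ (Fin N) → ℝ)
    (hrpos : ∀ x ∈ Ω, 0 < r x) (hr'pos : ∀ x ∈ Ω', 0 < r' x)
    (hrrule : ∀ x ∈ Ω, r' (f x) = |(fderiv ℝ f x).det| ^ ((1 : ℝ) / N) * r x)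
    (u u' : EuclideanSpace ℝ (Fin N) → ℝ)
    (hu : ContDiff ℝ (⊤ : ℕ∞) u) (hcs : HasCompactSupport u) (hsupp : tsupport u ⊆ Ω)
    (hu' : ContDiff ℝ (⊤ : ℕ∞) u') (hcs' : HasCompactSupport u') (hsupp' : tsupport u' ⊆ Ω')
    (hrel : ∀ x ∈ Ω,
      u' (f x) = |(fderiv ℝ f x).det| ^ (((2 : ℝ) - N) / (2 * N)) * u x) :
    ∫ x in Ω, |u x| ^ p / r x ^ s = ∫ x in Ω', |u' x| ^ p / r' x ^ s := by
  have hNR : (2 : ℝ) ≤ (N : ℝ) := by exact_mod_cast hN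
  have hN0 : (N : ℝ) ≠ 0 := by positivity
  -- differentiability
  have hdiff : ∀ x ∈ Ω, HasFDerivWithinAt f (fderiv ℝ f x) Ω x := fun x hx =>
    (((hf.differentiableOn (by simp)) x hx).differentiableAt
      (hΩ.mem_nhds hx)).hasFDerivAt.hasFDerivWithinAt
  have himg : f '' Ω = Ω' := hbij.image_eq
  rw [← himg,
    integral_image_eq_integral_abs_det_fderiv_smul volume hΩ.measurableSet hdiff hbij.injOn]
  refine setIntegral_congr_fun hΩ.measurableSet (fun x hx => ?_)
  -- pointwise identity
  have hJpos : 0 < |(fderiv ℝ f x).det| := by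
    rw [abs_pos]
    intro h0
    have hinj : Function.Injective (fderiv ℝ f x) := (hconf x hx).injective
    have hker : LinearMap.ker (fderiv ℝ f x).toLinearMap = ⊥ :=
      LinearMap.ker_eq_bot.mpr hinj
    have hlt := LinearMap.bot_lt_ker_of_det_eq_zero (f := (fderiv ℝ f x).toLinearMap) h0
    rw [hker] at hlt
    exact absurd hlt (lt_irrefl _)
  set J : ℝ := |(fderiv ℝ f x).det| with hJ
  have h1 : |u' (f x)| ^ p = J ^ ((((2 : ℝ) - N) / (2 * N)) * p) * |u x| ^ p := by
    rw [hrel x hx, abs_mul, abs_of_nonneg (Real.rpow_nonneg hJpos.le _),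
      Real.mul_rpow (Real.rpow_nonneg hJpos.le _) (abs_nonneg _),
      ← Real.rpow_mul hJpos.le]
  have h2 : r' (f x) ^ s = J ^ (s / N) * r x ^ s := by
    rw [hrrule x hx, Real.mul_rpow (Real.rpow_nonneg hJpos.le _) (hrpos x hx).le,
      ← Real.rpow_mul hJpos.le]
    ring_nf
  have hE : (1 : ℝ) + (((2 : ℝ) - N) / (2 * N)) * p - s / N = 0 := by
    rcases hadm with ⟨hN3, _, _, hp⟩ | ⟨hN2, hs2⟩
    · have hN3R : (3 : ℝ) ≤ (N : ℝ) := by exact_mod_cast hN3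
      have hN2ne : (N : ℝ) - 2 ≠ 0 := by linarith
      rw [hp]; field_simp; ring
    · subst hN2 hs2; norm_num
  have key : J * J ^ ((((2 : ℝ) - N) / (2 * N)) * p) / J ^ (s / N) = 1 := by
    nth_rewrite 1 [← Real.rpow_one J]
    rw [← Real.rpow_add hJpos, ← Real.rpow_sub hJpos, hE, Real.rpow_zero]
  have hrs : r x ^ s ≠ 0 := (Real.rpow_pos_of_pos (hrpos x hx) s).ne'
  have hJs : J ^ (s / N) ≠ 0 := (Real.rpow_pos_of_pos hJpos _).ne'
  rw [smul_eq_mul, h1, h2]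
  have expand : J * (J ^ ((((2 : ℝ) - N) / (2 * N)) * p) * |u x| ^ p /
      (J ^ (s / N) * r x ^ s)) =
      (J * J ^ ((((2 : ℝ) - N) / (2 * N)) * p) / J ^ (s / N)) * (|u x| ^ p / r x ^ s) := by
    field_simp
  rw [expand, key, one_mul]
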